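/- arXiv:2104.06753 — 7 statements merged into one kernel-verified Lean document; each statement's English description precedes it below -/
import Mathlib

section
/- Let μ and ν be measures on a measurable space (X, 𝒜). Define λ : 𝒜 → [0,∞] by λ(A) = inf_{B ∈ 𝒜} ( μ(A ∩ B) + ν(A ∩ Bᶜ) ). Then λ is a measure on (X, 𝒜): λ(∅) = 0 and λ(⋃ₙ Aₙ) = ∑ₙ λ(Aₙ) for every countable pairwise disjoint family (Aₙ) of measurable sets. -/
open MeasureTheory ENNReal

/-- The function `λ A = ⨅_{B ∈ 𝒜} (μ(A ∩ B) + ν(A ∩ Bᶜ))` is a measure: it vanishes on `∅`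
and is countably additive on pairwise disjoint measurable families. -/
theorem stmt_0 {X : Type*} [MeasurableSpace X] (μ ν : Measure X)
    (lam : Set X → ℝ≥0∞)
    (hlam : ∀ A : Set X,
      lam A = ⨅ (B : Set X) (_ : MeasurableSet B), μ (A ∩ B) + ν (A ∩ Bᶜ)) :
    lam ∅ = 0 ∧
      ∀ A : ℕ → Set X, (∀ n, MeasurableSet (A n)) → Pairwise (Function.onFun Disjoint A) →
        lam (⋃ n, A n) = ∑' n, lam (A n) := by
  constructor
  · rw [hlam]
    refine le_antisymm ?_ zero_le
    refine iInf_le_of_le ∅ (iInf_le_of_le MeasurableSet.empty ?_)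
    simp
  · intro A hA hdisj
    refine le_antisymm ?_ ?_
    · -- λ(⋃) ≤ ∑
      rcases eq_top_or_lt_top (∑' n, lam (A n)) with htop | hlt
      · simp [htop]
      refine ENNReal.le_of_forall_pos_le_add fun ε hε _ => ?_
      obtain ⟨δ, hδpos, hδsum⟩ :=
        ENNReal.exists_pos_sum_of_countable (ENNReal.coe_ne_zero.mpr hε.ne') ℕ
      have hchoose : ∀ n, ∃ B : Set X, MeasurableSet B ∧
          μ (A n ∩ B) + ν (A n ∩ Bᶜ) ≤ lam (A n) + δ n := by
        intro n
        rcases eq_top_or_lt_top (lam (A n)) with ht | hl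
        · exact ⟨Set.univ, MeasurableSet.univ, by simp [ht]⟩
        · have hlt2 : lam (A n) < lam (A n) + δ n :=
            ENNReal.lt_add_right hl.ne (by exact_mod_cast (hδpos n).ne')
          have h2 : (⨅ (B : Set X) (_ : MeasurableSet B), μ (A n ∩ B) + ν (A n ∩ Bᶜ))
              < lam (A n) + δ n := by rw [← hlam]; exact hlt2
          obtain ⟨B, hB⟩ := iInf_lt_iff.mp h2
          obtain ⟨hBm, hBlt⟩ := iInf_lt_iff.mp hB
          exact ⟨B, hBm, hBlt.le⟩
      choose B hBm hBle using hchoose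
      set C := ⋃ n, A n ∩ B n with hC
      have hCm : MeasurableSet C := MeasurableSet.iUnion fun n => (hA n).inter (hBm n)
      have key : lam (⋃ n, A n) ≤ μ ((⋃ n, A n) ∩ C) + ν ((⋃ n, A n) ∩ Cᶜ) := by
        rw [hlam]; exact iInf₂_le C hCm
      have h1 : μ ((⋃ n, A n) ∩ C) ≤ ∑' n, μ (A n ∩ B n) := by
        refine (measure_mono ?_).trans (measure_iUnion_le _)
        intro x hx; exact hx.2
      have h2 : ν ((⋃ n, A n) ∩ Cᶜ) ≤ ∑' n, ν (A n ∩ (B n)ᶜ) := by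
        refine (measure_mono ?_).trans (measure_iUnion_le _)
        rintro x ⟨hx, hxc⟩
        obtain ⟨n, hn⟩ := Set.mem_iUnion.mp hx
        exact Set.mem_iUnion.mpr ⟨n, hn, fun hb => hxc (Set.mem_iUnion.mpr ⟨n, hn, hb⟩)⟩
      calc lam (⋃ n, A n) ≤ μ ((⋃ n, A n) ∩ C) + ν ((⋃ n, A n) ∩ Cᶜ) := key
        _ ≤ (∑' n, μ (A n ∩ B n)) + ∑' n, ν (A n ∩ (B n)ᶜ) := add_le_add h1 h2
        _ = ∑' n, (μ (A n ∩ B n) + ν (A n ∩ (B n)ᶜ)) := (ENNReal.tsum_add).symm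
        _ ≤ ∑' n, (lam (A n) + δ n) := ENNReal.tsum_le_tsum hBle
        _ = (∑' n, lam (A n)) + ∑' n, (δ n : ℝ≥0∞) := ENNReal.tsum_add
        _ ≤ (∑' n, lam (A n)) + ε := add_le_add le_rfl hδsum.le
    · -- ∑ ≤ λ(⋃)
      rw [hlam]
      refine le_iInf fun Bs => le_iInf fun hB => ?_
      have hμ : μ ((⋃ n, A n) ∩ Bs) = ∑' n, μ (A n ∩ Bs) := by
        rw [Set.iUnion_inter]
        exact measure_iUnion
          (hdisj.mono fun i j h => h.mono Set.inter_subset_left Set.inter_subset_left)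
          fun n => (hA n).inter hB
      have hν : ν ((⋃ n, A n) ∩ Bsᶜ) = ∑' n, ν (A n ∩ Bsᶜ) := by
        rw [Set.iUnion_inter]
        exact measure_iUnion
          (hdisj.mono fun i j h => h.mono Set.inter_subset_left Set.inter_subset_left)
          fun n => (hA n).inter hB.compl
      rw [hμ, hν, ← ENNReal.tsum_add]
      refine ENNReal.tsum_le_tsum fun n => ?_
      rw [hlam]
      exact iInf₂_le Bs hB
end

section
/- Let μ and ν be measures on a measurable space (X, 𝒜). Then for every measurable set A, the infimum μ ⊓ ν (the greatest lower bound of μ and ν in the lattice of measures under the pointwise order) satisfies (μ ⊓ ν)(A) = inf_{B ∈ 𝒜} ( μ(A ∩ B) + ν(A ∩ Bᶜ) ). -/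
open MeasureTheory ENNReal

/-- The lattice infimum `μ ⊓ ν` of two measures satisfies
`(μ ⊓ ν)(A) = ⨅_{B ∈ 𝒜} (μ(A ∩ B) + ν(A ∩ Bᶜ))` for every measurable `A`. -/
theorem stmt_5 {X : Type*} [MeasurableSpace X] (μ ν : Measure X)
    (A : Set X) (hA : MeasurableSet A) :
    (μ ⊓ ν) A = ⨅ (B : Set X) (_ : MeasurableSet B), μ (A ∩ B) + ν (A ∩ Bᶜ) := by
  rw [MeasureTheory.Measure.inf_apply hA]
  apply le_antisymm
  · refine le_iInf₂ fun B hB => sInf_le ⟨B, by rw [Set.inter_comm, Set.inter_comm Bᶜ]⟩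
  · refine le_sInf ?_
    rintro m ⟨t, rfl⟩
    set B := toMeasurable μ (t ∩ A) with hBdef
    refine (iInf₂_le B (measurableSet_toMeasurable μ _)).trans ?_
    refine add_le_add ?_ ?_
    · calc μ (A ∩ B) ≤ μ B := measure_mono Set.inter_subset_right
        _ = μ (t ∩ A) := measure_toMeasurable _
    · refine measure_mono fun x hx => ?_
      have hsub : t ∩ A ⊆ B := subset_toMeasurable μ _
      exact ⟨fun hxt => hx.2 (hsub ⟨hxt, hx.1⟩), hx.1⟩
end

section
/- Let μ and ν be measures on a measurable space (X, 𝒜). Then for every measurable set A, the supremum μ ⊔ ν (the least upper bound of μ and ν in the lattice of measures under the pointwise order) satisfies (μ ⊔ ν)(A) = sup_{B ∈ 𝒜} ( μ(A ∩ B) + ν(A ∩ Bᶜ) ). -/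
open MeasureTheory ENNReal

open Classical in
/-- Auxiliary measure: `s ↦ ⨆ B measurable, μ (s ∩ B) + ν (s ∩ Bᶜ)`. -/
noncomputable def supCand {X : Type*} [MeasurableSpace X] (μ ν : Measure X) : Measure X :=
  Measure.ofMeasurable (fun s _ => ⨆ (B : {B : Set X // MeasurableSet B}),
      μ (s ∩ B.1) + ν (s ∩ B.1ᶜ))
    (by simp)
    (by
      intro f hf hd
      set g : ℕ → {B : Set X // MeasurableSet B} → ℝ≥0∞ :=
        fun a B => μ (f a ∩ B.1) + ν (f a ∩ B.1ᶜ) with hg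
      have key : ∀ (a : ℕ) (C : ℕ → Set X),
          f a ∩ (⋃ b, f b ∩ C b) = f a ∩ C a ∧ f a ∩ (⋃ b, f b ∩ C b)ᶜ = f a ∩ (C a)ᶜ := by
        intro a C
        constructor <;> ext x <;>
          simp only [Set.mem_inter_iff, Set.mem_iUnion, Set.mem_compl_iff, not_exists] <;>
          constructor
        · rintro ⟨hxa, b, hxb, hxc⟩
          rcases eq_or_ne b a with rfl | hba
          · exact ⟨hxa, hxc⟩
          · exact (Set.disjoint_left.1 (hd hba) hxb hxa).elim
        · rintro ⟨hxa, hxc⟩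
          exact ⟨hxa, a, hxa, hxc⟩
        · rintro ⟨hxa, h2⟩
          exact ⟨hxa, fun hca => h2 a ⟨hxa, hca⟩⟩
        · rintro ⟨hxa, hxc⟩
          refine ⟨hxa, fun b ⟨hxb, hcb⟩ => ?_⟩
          rcases eq_or_ne b a with rfl | hba
          · exact hxc hcb
          · exact (Set.disjoint_left.1 (hd hba) hxb hxa).elim
      have hdir : ∀ (B C : {B : Set X // MeasurableSet B}),
          ∃ D, ∀ a, g a B ≤ g a D ∧ g a C ≤ g a D := by
        intro B C
        set Ch : ℕ → Set X := fun a => if g a C ≤ g a B then B.1 else C.1 with hCh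
        have hChm : ∀ a, MeasurableSet (Ch a) := by
          intro a; simp only [hCh]; split_ifs; exacts [B.2, C.2]
        have hDm : MeasurableSet (⋃ b, f b ∩ Ch b) :=
          MeasurableSet.iUnion fun b => (hf b).inter (hChm b)
        refine ⟨⟨⋃ b, f b ∩ Ch b, hDm⟩, fun a => ?_⟩
        have h1 := (key a Ch).1
        have h2 := (key a Ch).2
        have hgD : g a ⟨⋃ b, f b ∩ Ch b, hDm⟩ = μ (f a ∩ Ch a) + ν (f a ∩ (Ch a)ᶜ) := by
          simp only [hg, h1, h2]
        rw [hgD]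
        by_cases hc : g a C ≤ g a B
        · have : Ch a = B.1 := if_pos hc
          rw [this]
          exact ⟨le_rfl, hc⟩
        · have : Ch a = C.1 := if_neg hc
          rw [this]
          exact ⟨(not_le.1 hc).le, le_rfl⟩
      -- now prove countable additivity
      refine le_antisymm ?_ ?_
      · -- sup ≤ tsum of sups
        refine iSup_le fun B => ?_
        have h1 : μ ((⋃ i, f i) ∩ B.1) = ∑' i, μ (f i ∩ B.1) := by
          rw [Set.iUnion_inter]
          exact measure_iUnion (hd.mono fun i j h => h.mono Set.inter_subset_left
            Set.inter_subset_left) fun i => (hf i).inter B.2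
        have h2 : ν ((⋃ i, f i) ∩ B.1ᶜ) = ∑' i, ν (f i ∩ B.1ᶜ) := by
          rw [Set.iUnion_inter]
          exact measure_iUnion (hd.mono fun i j h => h.mono Set.inter_subset_left
            Set.inter_subset_left) fun i => (hf i).inter B.2.compl
        rw [h1, h2, ← ENNReal.tsum_add]
        exact ENNReal.tsum_le_tsum fun a => le_iSup (g a) B
      · -- tsum of sups ≤ sup
        rw [ENNReal.tsum_eq_iSup_sum]
        refine iSup_le fun s => ?_
        rw [ENNReal.finsetSum_iSup hdir]
        refine iSup_le fun B => le_iSup_of_le B ?_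
        have h1 : μ ((⋃ i, f i) ∩ B.1) = ∑' i, μ (f i ∩ B.1) := by
          rw [Set.iUnion_inter]
          exact measure_iUnion (hd.mono fun i j h => h.mono Set.inter_subset_left
            Set.inter_subset_left) fun i => (hf i).inter B.2
        have h2 : ν ((⋃ i, f i) ∩ B.1ᶜ) = ∑' i, ν (f i ∩ B.1ᶜ) := by
          rw [Set.iUnion_inter]
          exact measure_iUnion (hd.mono fun i j h => h.mono Set.inter_subset_left
            Set.inter_subset_left) fun i => (hf i).inter B.2.compl
        rw [h1, h2, ← ENNReal.tsum_add]
        exact ENNReal.sum_le_tsum s)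

/-- The lattice supremum `μ ⊔ ν` of two measures satisfies
`(μ ⊔ ν)(A) = ⨆_{B ∈ 𝒜} (μ(A ∩ B) + ν(A ∩ Bᶜ))` for every measurable `A`. -/
theorem stmt_8 {X : Type*} [MeasurableSpace X] (μ ν : Measure X)
    (A : Set X) (hA : MeasurableSet A) :
    (μ ⊔ ν) A = ⨆ (B : Set X) (_ : MeasurableSet B), μ (A ∩ B) + ν (A ∩ Bᶜ) := by
  have happ : ∀ s : Set X, MeasurableSet s →
      supCand μ ν s = ⨆ (B : {B : Set X // MeasurableSet B}), μ (s ∩ B.1) + ν (s ∩ B.1ᶜ) := by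
    intro s hs
    rw [supCand, Measure.ofMeasurable_apply s hs]
  refine le_antisymm ?_ ?_
  · have hle : μ ⊔ ν ≤ supCand μ ν := by
      refine sup_le ?_ ?_ <;> refine Measure.le_iff.2 fun s hs => ?_
      · rw [happ s hs]
        refine le_trans ?_ (le_iSup _ ⟨Set.univ, MeasurableSet.univ⟩)
        simp
      · rw [happ s hs]
        refine le_trans ?_ (le_iSup _ ⟨∅, MeasurableSet.empty⟩)
        simp
    calc (μ ⊔ ν) A ≤ supCand μ ν A := hle A
      _ = ⨆ (B : {B : Set X // MeasurableSet B}), μ (A ∩ B.1) + ν (A ∩ B.1ᶜ) := happ A hA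
      _ = ⨆ (B : Set X) (_ : MeasurableSet B), μ (A ∩ B) + ν (A ∩ Bᶜ) := by
          rw [iSup_subtype]
  · refine iSup₂_le fun B hB => ?_
    have h1 : μ (A ∩ B) ≤ (μ ⊔ ν) (A ∩ B) := le_sup_left (b := ν) (A ∩ B)
    have h2 : ν (A ∩ Bᶜ) ≤ (μ ⊔ ν) (A ∩ Bᶜ) := le_sup_right (a := μ) (A ∩ Bᶜ)
    calc μ (A ∩ B) + ν (A ∩ Bᶜ) ≤ (μ ⊔ ν) (A ∩ B) + (μ ⊔ ν) (A ∩ Bᶜ) := add_le_add h1 h2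
      _ = (μ ⊔ ν) A := by
          rw [show A ∩ Bᶜ = A \ B from rfl]
          exact measure_inter_add_diff A hB
end

section
/- Let (μ_α)_{α ∈ I} be a nonempty family of measures on a measurable space (X, 𝒜). Define λ : 𝒜 → [0,∞] by λ(A) = inf { ∑ₙ μ_{f(n)}(A ∩ Bₙ) }, where the infimum ranges over all sequences (Bₙ)_{n∈ℕ} of pairwise disjoint measurable sets with ⋃ₙ Bₙ = X and all functions f : ℕ → I. Then λ is a measure on (X, 𝒜): λ(∅) = 0 and λ(⋃ₘ Aₘ) = ∑ₘ λ(Aₘ) for every countable pairwise disjoint family (Aₘ) of measurable sets. -/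
open MeasureTheory ENNReal Set

/-- For a nonempty family of measures `(μ_α)`, the function
`λ A = inf { ∑ₙ μ_{f n}(A ∩ Bₙ) }`, where `(Bₙ)` runs over countable measurable partitions
of `X` and `f : ℕ → I`, is a measure: it vanishes on `∅` and is countably additive on
pairwise disjoint measurable families. -/
theorem stmt_9 {X : Type*} [MeasurableSpace X] {I : Type*} [Nonempty I]
    (μ : I → Measure X) (lam : Set X → ℝ≥0∞)
    (hlam : ∀ A : Set X, lam A =
      sInf {x : ℝ≥0∞ | ∃ (B : ℕ → Set X) (f : ℕ → I),
        (∀ n, MeasurableSet (B n)) ∧ Pairwise (Function.onFun Disjoint B) ∧ (⋃ n, B n) = univ ∧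
        x = ∑' n, μ (f n) (A ∩ B n)}) :
    lam ∅ = 0 ∧
      ∀ A : ℕ → Set X, (∀ m, MeasurableSet (A m)) → Pairwise (Function.onFun Disjoint A) →
        lam (⋃ m, A m) = ∑' m, lam (A m) := by
  -- the trivial partition
  have htriv : ∀ A : Set X, ∃ (B : ℕ → Set X) (f : ℕ → I),
      (∀ n, MeasurableSet (B n)) ∧ Pairwise (Function.onFun Disjoint B) ∧ (⋃ n, B n) = univ ∧
      (∑' n, μ (f n) (A ∩ B n)) = ∑' n, μ (f n) (A ∩ B n) := by
    intro A
    refine ⟨fun n => if n = 0 then univ else ∅, fun _ => Classical.arbitrary I,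
      fun n => by by_cases h : n = 0 <;> simp [h], ?_, ?_, rfl⟩
    · intro i j hij
      rcases eq_or_ne i 0 with rfl | hi
      · have : j ≠ 0 := fun h => hij h.symm
        simp [Function.onFun, this]
      · simp [Function.onFun, hi]
    · apply eq_univ_of_univ_subset
      exact le_iSup_of_le 0 (by simp)
  constructor
  · refine le_antisymm ?_ (by simp)
    rw [hlam]
    refine sInf_le ?_
    obtain ⟨B, f, hm, hd, hu, -⟩ := htriv (∅ : Set X)
    exact ⟨B, f, hm, hd, hu, by simp⟩
  · intro A hA hAd
    refine le_antisymm ?_ ?_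
    · -- λ(⋃ A) ≤ ∑ λ(A m)
      apply ENNReal.le_of_forall_pos_le_add
      intro ε hε hfin
      obtain ⟨δ, hδpos, hδsum⟩ :=
        ENNReal.exists_pos_sum_of_countable (ε := (ε : ℝ≥0∞)) (by exact_mod_cast hε.ne') ℕ
      have hAfin : ∀ m, lam (A m) ≠ ∞ :=
        ENNReal.ne_top_of_tsum_ne_top hfin.ne
      have hex : ∀ m, ∃ (B : ℕ → Set X) (f : ℕ → I),
          (∀ n, MeasurableSet (B n)) ∧ Pairwise (Function.onFun Disjoint B) ∧ (⋃ n, B n) = univ ∧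
          (∑' n, μ (f n) (A m ∩ B n)) < lam (A m) + δ m := by
        intro m
        have hlt : sInf {x : ℝ≥0∞ | ∃ (B : ℕ → Set X) (f : ℕ → I),
            (∀ n, MeasurableSet (B n)) ∧ Pairwise (Function.onFun Disjoint B) ∧ (⋃ n, B n) = univ ∧
            x = ∑' n, μ (f n) (A m ∩ B n)} < lam (A m) + δ m := by
          rw [← hlam]
          exact ENNReal.lt_add_right (hAfin m) (by exact_mod_cast (hδpos m).ne')
        obtain ⟨x, ⟨B, f, h1, h2, h3, rfl⟩, hxlt⟩ := sInf_lt_iff.mp hlt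
        exact ⟨B, f, h1, h2, h3, hxlt⟩
      choose B f hBm hBd hBu hBlt using hex
      -- combined partition
      set π : ℕ ≃ ℕ × ℕ := Nat.pairEquiv.symm with hπ
      set D : ℕ → Set X := fun k => match k with
        | 0 => (⋃ m, A m)ᶜ
        | k + 1 => A (π k).1 ∩ B (π k).1 (π k).2 with hD
      set g : ℕ → I := fun k => match k with
        | 0 => Classical.arbitrary I
        | k + 1 => f (π k).1 (π k).2 with hg
      have hDsub : ∀ k, D (k + 1) ⊆ ⋃ m, A m := fun k =>
        (inter_subset_left).trans (subset_iUnion A _)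
      have hDm : ∀ k, MeasurableSet (D k) := by
        intro k
        match k with
        | 0 => exact (MeasurableSet.iUnion hA).compl
        | k + 1 => exact (hA _).inter (hBm _ _)
      have hDd : Pairwise (Function.onFun Disjoint D) := by
        intro i j hij
        match i, j with
        | 0, 0 => exact absurd rfl hij
        | 0, k + 1 =>
          exact (disjoint_compl_left_iff_subset.mpr (hDsub k)).symm.symm
        | k + 1, 0 =>
          exact (disjoint_compl_left_iff_subset.mpr (hDsub k)).symm
        | k + 1, l + 1 =>
          have hkl : π k ≠ π l := fun h => hij (by
            have := π.injective h; simp [this])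
          show Disjoint (A (π k).1 ∩ B (π k).1 (π k).2) (A (π l).1 ∩ B (π l).1 (π l).2)
          rcases eq_or_ne (π k).1 (π l).1 with h1 | h1
          · have h2 : (π k).2 ≠ (π l).2 := fun h2 => hkl (Prod.ext h1 h2)
            refine Disjoint.mono inter_subset_right inter_subset_right ?_
            rw [h1]
            exact hBd (π l).1 h2
          · exact ((hAd h1).mono inter_subset_left inter_subset_left)
      have hDu : (⋃ k, D k) = univ := by
        apply eq_univ_of_forall
        intro x
        by_cases hx : x ∈ ⋃ m, A m
        · obtain ⟨m, hm⟩ := mem_iUnion.mp hx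
          have hxB : x ∈ ⋃ n, B m n := (hBu m).symm ▸ mem_univ x
          obtain ⟨n, hn⟩ := mem_iUnion.mp hxB
          refine mem_iUnion.mpr ⟨π.symm (m, n) + 1, ?_⟩
          have : π (π.symm (m, n)) = (m, n) := π.apply_symm_apply _
          simp only [hD, this]
          exact ⟨hm, hn⟩
        · exact mem_iUnion.mpr ⟨0, hx⟩
      have hle : lam (⋃ m, A m) ≤ ∑' k, μ (g k) ((⋃ m, A m) ∩ D k) := by
        rw [hlam]
        exact sInf_le ⟨D, g, hDm, hDd, hDu, rfl⟩
      have hcalc : (∑' k, μ (g k) ((⋃ m, A m) ∩ D k))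
          = ∑' (m : ℕ) (n : ℕ), μ (f m n) (A m ∩ B m n) := by
        rw [tsum_eq_zero_add' ENNReal.summable]
        have h0 : μ (g 0) ((⋃ m, A m) ∩ D 0) = 0 := by
          have he : (⋃ m, A m) ∩ D 0 = ∅ := by
            show (⋃ m, A m) ∩ (⋃ m, A m)ᶜ = ∅
            exact inter_compl_self _
          rw [he, measure_empty]
        rw [h0, zero_add]
        have hsucc : ∀ k, μ (g (k + 1)) ((⋃ m, A m) ∩ D (k + 1))
            = μ (f (π k).1 (π k).2) (A (π k).1 ∩ B (π k).1 (π k).2) := by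
          intro k
          congr 1
          rw [inter_eq_right.mpr (hDsub k)]
        calc (∑' k, μ (g (k + 1)) ((⋃ m, A m) ∩ D (k + 1)))
            = ∑' k, μ (f (π k).1 (π k).2) (A (π k).1 ∩ B (π k).1 (π k).2) := by
              exact tsum_congr hsucc
          _ = ∑' (p : ℕ × ℕ), μ (f p.1 p.2) (A p.1 ∩ B p.1 p.2) :=
              π.tsum_eq (fun p : ℕ × ℕ => μ (f p.1 p.2) (A p.1 ∩ B p.1 p.2))
          _ = ∑' (m : ℕ) (n : ℕ), μ (f m n) (A m ∩ B m n) :=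
              ENNReal.tsum_prod (f := fun m n => μ (f m n) (A m ∩ B m n))
      calc lam (⋃ m, A m) ≤ ∑' (m : ℕ) (n : ℕ), μ (f m n) (A m ∩ B m n) :=
            hcalc ▸ hle
        _ ≤ ∑' m, (lam (A m) + δ m) := ENNReal.tsum_le_tsum fun m => (hBlt m).le
        _ = (∑' m, lam (A m)) + ∑' m, (δ m : ℝ≥0∞) := ENNReal.tsum_add
        _ ≤ (∑' m, lam (A m)) + ε := add_le_add_right hδsum.le _
    · -- ∑ λ(A m) ≤ λ(⋃ A)
      rw [hlam (⋃ m, A m)]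
      refine le_sInf ?_
      rintro x ⟨C, h, hCm, hCd, hCu, rfl⟩
      have h1 : ∀ m, lam (A m) ≤ ∑' n, μ (h n) (A m ∩ C n) := by
        intro m
        rw [hlam]
        exact sInf_le ⟨C, h, hCm, hCd, hCu, rfl⟩
      calc (∑' m, lam (A m)) ≤ ∑' (m : ℕ) (n : ℕ), μ (h n) (A m ∩ C n) :=
            ENNReal.tsum_le_tsum h1
        _ = ∑' (n : ℕ) (m : ℕ), μ (h n) (A m ∩ C n) := ENNReal.tsum_comm
        _ = ∑' n, μ (h n) ((⋃ m, A m) ∩ C n) := by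
            refine tsum_congr fun n => ?_
            rw [iUnion_inter]
            exact (measure_iUnion (fun i j hij =>
              (hAd hij).mono inter_subset_left inter_subset_left)
              (fun m => (hA m).inter (hCm n))).symm
        _ ≤ ∑' n, μ (h n) ((⋃ m, A m) ∩ C n) := le_rfl
end

section
/- Let (μ_α)_{α ∈ I} be a nonempty family of measures on a measurable space (X, 𝒜). Then for every measurable set A, the infimum ⨅_{α ∈ I} μ_α in the complete lattice of measures under the pointwise order satisfies (⨅_{α ∈ I} μ_α)(A) = inf { ∑ₙ μ_{f(n)}(A ∩ Bₙ) }, where the infimum on the right ranges over all countable measurable partitions (Bₙ)_{n∈ℕ} of X and all functions f : ℕ → I. -/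
open MeasureTheory ENNReal Set

/-- The lattice infimum `⨅ α, μ α` of a nonempty family of measures satisfies, for every
measurable `A`, `(⨅ α, μ α)(A) = inf { ∑ₙ μ_{f n}(A ∩ Bₙ) }`, the infimum ranging over all
countable measurable partitions `(Bₙ)` of `X` and all functions `f : ℕ → I`. -/
theorem stmt_12 {X : Type*} [MeasurableSpace X] {I : Type*} [Nonempty I]
    (μ : I → Measure X) (A : Set X) (hA : MeasurableSet A) :
    (⨅ α, μ α) A =
      sInf {x : ℝ≥0∞ | ∃ (B : ℕ → Set X) (f : ℕ → I),
        (∀ n, MeasurableSet (B n)) ∧ Pairwise (Function.onFun Disjoint B) ∧ (⋃ n, B n) = univ ∧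
        x = ∑' n, μ (f n) (A ∩ B n)} := by
  apply le_antisymm
  · -- easy direction
    apply le_sInf
    rintro x ⟨B, f, hB, hdisj, hunion, rfl⟩
    have h1 : (⨅ α, μ α) A = ∑' n, (⨅ α, μ α) (A ∩ B n) := by
      rw [← measure_iUnion (hdisj.mono fun i j h => h.mono inter_subset_right inter_subset_right)
        (fun n => hA.inter (hB n)), ← inter_iUnion, hunion, inter_univ]
    rw [h1]
    exact ENNReal.tsum_le_tsum fun n =>
      (iInf_le (fun α => μ α) (f n) : (⨅ α, μ α) ≤ μ (f n)) (A ∩ B n)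
  · -- hard direction: rewrite LHS via the outer-measure infimum formula
    have key : (⨅ α, μ α) A =
        ⨅ (t : ℕ → Set X) (_ : A ⊆ iUnion t), ∑' n, ⨅ α, μ α (t n) := by
      rw [iInf, Measure.sInf_apply hA,
        OuterMeasure.sInf_apply ((range_nonempty μ).image _)]
      congr 1
      ext t
      congr 1
      ext _
      congr 1
      ext n
      rw [iInf_image, iInf_range]
      rfl
    rw [key]
    refine le_iInf fun t => le_iInf fun ht => ?_
    refine ENNReal.le_of_forall_pos_le_add fun ε hε _ => ?_
    obtain ⟨δ, hδpos, hδsum⟩ :=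
      ENNReal.exists_pos_sum_of_countable (by exact_mod_cast hε.ne' : (ε : ℝ≥0∞) ≠ 0) ℕ
    -- choose nearly optimal measures
    have hchoice : ∀ n, ∃ α, μ α (t n) ≤ (⨅ α, μ α (t n)) + δ n := by
      intro n
      by_cases h : (⨅ α, μ α (t n)) = ⊤
      · exact ⟨Classical.arbitrary I, le_trans (le_top) (by simp [h])⟩
      · obtain ⟨α, hα⟩ := iInf_lt_iff.mp
          (ENNReal.lt_add_right h (by exact_mod_cast (hδpos n).ne' : (δ n : ℝ≥0∞) ≠ 0))
        exact ⟨α, hα.le⟩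
    choose f hf using hchoice
    -- measurable hulls
    set u : ℕ → Set X := fun n => toMeasurable (μ (f n)) (t n) with hu
    have htu : ∀ n, t n ⊆ u n := fun n => subset_toMeasurable _ _
    have hum : ∀ n, MeasurableSet (u n) := fun n => measurableSet_toMeasurable _ _
    have huμ : ∀ n, μ (f n) (u n) = μ (f n) (t n) := fun n => measure_toMeasurable _
    -- build the partition
    set v : ℕ → Set X := fun n => Nat.casesOn n (⋃ k, u k)ᶜ u with hv
    have hvm : ∀ n, MeasurableSet (v n) := by
      rintro (_ | n)
      · exact (MeasurableSet.iUnion hum).compl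
      · exact hum n
    set B : ℕ → Set X := disjointed v with hB
    have hBm : ∀ n, MeasurableSet (B n) := MeasurableSet.disjointed hvm
    have hBdisj : Pairwise (Function.onFun Disjoint B) := disjoint_disjointed v
    have hBunion : (⋃ n, B n) = univ := by
      rw [hB, iUnion_disjointed]
      apply eq_univ_of_forall
      intro x
      by_cases hx : x ∈ ⋃ k, u k
      · obtain ⟨k, hk⟩ := mem_iUnion.mp hx
        exact mem_iUnion.mpr ⟨k + 1, hk⟩
      · exact mem_iUnion.mpr ⟨0, hx⟩
    set g : ℕ → I := fun n => Nat.casesOn n (Classical.arbitrary I) f with hg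
    have hmem : (∑' n, μ (g n) (A ∩ B n)) ∈ {x : ℝ≥0∞ | ∃ (B : ℕ → Set X) (f : ℕ → I),
        (∀ n, MeasurableSet (B n)) ∧ Pairwise (Function.onFun Disjoint B) ∧ (⋃ n, B n) = univ ∧
        x = ∑' n, μ (f n) (A ∩ B n)} := ⟨B, g, hBm, hBdisj, hBunion, rfl⟩
    refine le_trans (sInf_le hmem) ?_
    -- estimate the sum
    have h0 : μ (g 0) (A ∩ B 0) = 0 := by
      have : A ∩ B 0 = ∅ := by
        apply eq_empty_of_subset_empty
        intro x hx
        have hxB : x ∈ (⋃ k, u k)ᶜ := disjointed_subset v 0 hx.2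
        obtain ⟨k, hk⟩ := mem_iUnion.mp (ht hx.1)
        exact (hxB (mem_iUnion.mpr ⟨k, htu k hk⟩)).elim
      simp [this]
    have hsucc : ∀ n, μ (g (n + 1)) (A ∩ B (n + 1)) ≤ (⨅ α, μ α (t n)) + δ n := by
      intro n
      calc μ (f n) (A ∩ B (n + 1)) ≤ μ (f n) (u n) :=
            measure_mono (le_trans inter_subset_right (disjointed_subset v (n + 1)))
        _ = μ (f n) (t n) := huμ n
        _ ≤ (⨅ α, μ α (t n)) + δ n := hf n
    calc (∑' n, μ (g n) (A ∩ B n))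
        = μ (g 0) (A ∩ B 0) + ∑' n, μ (g (n + 1)) (A ∩ B (n + 1)) :=
          tsum_eq_zero_add' ENNReal.summable
      _ = ∑' n, μ (g (n + 1)) (A ∩ B (n + 1)) := by rw [h0, zero_add]
      _ ≤ ∑' n, ((⨅ α, μ α (t n)) + δ n) := ENNReal.tsum_le_tsum hsucc
      _ = (∑' n, ⨅ α, μ α (t n)) + ∑' n, (δ n : ℝ≥0∞) := ENNReal.tsum_add
      _ ≤ (∑' n, ⨅ α, μ α (t n)) + ε := add_le_add_right hδsum.le _
end

section
/- Let (μ_α)_{α ∈ I} be a nonempty family of measures on a measurable space (X, 𝒜). Then for every measurable set A, the supremum ⨆_{α ∈ I} μ_α in the complete lattice of measures under the pointwise order satisfies (⨆_{α ∈ I} μ_α)(A) = sup { ∑ₙ μ_{f(n)}(A ∩ Bₙ) }, where the supremum on the right ranges over all countable measurable partitions (Bₙ)_{n∈ℕ} of X and all functions f : ℕ → I. -/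
open MeasureTheory ENNReal Set

section Aux

variable {X : Type*} [MeasurableSpace X] {I : Type*} [Nonempty I] (μ : I → Measure X)

/-- The candidate set of values for the supremum measure on a set `E`. -/
def supSet' (E : Set X) : Set ℝ≥0∞ :=
  {x : ℝ≥0∞ | ∃ (B : ℕ → Set X) (f : ℕ → I),
    (∀ n, MeasurableSet (B n)) ∧ Pairwise (Function.onFun Disjoint B) ∧ (⋃ n, B n) = univ ∧
    x = ∑' n, μ (f n) (E ∩ B n)}

lemma tsum_sum_type' {α β : Type*} (f : α ⊕ β → ℝ≥0∞) :
    ∑' x, f x = (∑' a, f (.inl a)) + ∑' b, f (.inr b) := by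
  rw [← tsum_univ f, ← Set.range_inl_union_range_inr,
    Summable.tsum_union_disjoint Set.isCompl_range_inl_range_inr.disjoint ENNReal.summable
      ENNReal.summable,
    tsum_range f Sum.inl_injective, tsum_range f Sum.inr_injective]

lemma mem_supSet'_of_partition {ι : Type} [Denumerable ι] (E : Set X) (D : ι → Set X) (g : ι → I)
    (hD : ∀ i, MeasurableSet (D i)) (hd : Pairwise (Function.onFun Disjoint D))
    (hU : (⋃ i, D i) = univ) : (∑' i, μ (g i) (E ∩ D i)) ∈ supSet' μ E := by
  let e : ℕ ≃ ι := (Denumerable.eqv ι).symm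
  refine ⟨D ∘ e, g ∘ e, fun n => hD (e n), hd.comp_of_injective e.injective,
    (e.surjective.iUnion_comp D).trans hU, ?_⟩
  exact (e.tsum_eq fun i => μ (g i) (E ∩ D i)).symm

lemma measure_apply_mem_supSet' (α : I) (E : Set X) : μ α E ∈ supSet' μ E := by
  classical
  refine ⟨fun n => if n = 0 then univ else ∅, fun _ => α, ?_, ?_, ?_, ?_⟩
  · intro n; simp only []; split <;> simp
  · intro i j hij
    rcases Nat.eq_zero_or_pos i with hi | hi
    · have hj : j ≠ 0 := fun h => hij (by rw [hi, h])
      simp [Function.onFun, hj]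
    · simp [Function.onFun, Nat.pos_iff_ne_zero.mp hi]
  · exact eq_univ_of_forall fun x => mem_iUnion.2 ⟨0, by simp⟩
  · rw [tsum_eq_single 0 (by intro n hn; simp [hn])]
    simp

lemma supSet'_nonempty (E : Set X) : (supSet' μ E).Nonempty := by
  obtain ⟨α⟩ := ‹Nonempty I›
  exact ⟨_, measure_apply_mem_supSet' μ α E⟩

lemma supSet'_mono {E F : Set X} (hEF : E ⊆ F) : sSup (supSet' μ E) ≤ sSup (supSet' μ F) := by
  refine sSup_le fun x hx => ?_
  obtain ⟨B, f, hB, hd, hU, rfl⟩ := hx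
  refine le_trans ?_ (le_sSup ⟨B, f, hB, hd, hU, rfl⟩)
  exact ENNReal.tsum_le_tsum fun n => measure_mono (inter_subset_inter_left _ hEF)

lemma supSet'_empty : sSup (supSet' μ ∅) = 0 := by
  refine le_antisymm (sSup_le fun x hx => ?_) zero_le
  obtain ⟨B, f, hB, hd, hU, rfl⟩ := hx
  simp

/-- Binary superadditivity. -/
lemma supSet'_superadd {E₁ E₂ : Set X} (h₁ : MeasurableSet E₁) (h₂ : MeasurableSet E₂)
    (hd₁₂ : Disjoint E₁ E₂) :
    sSup (supSet' μ E₁) + sSup (supSet' μ E₂) ≤ sSup (supSet' μ (E₁ ∪ E₂)) := by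
  rw [sSup_eq_iSup, sSup_eq_iSup]
  refine ENNReal.biSup_add_biSup_le (supSet'_nonempty μ E₁) (supSet'_nonempty μ E₂)
    fun x hx y hy => ?_
  obtain ⟨B, f, hB, hBd, hBU, rfl⟩ := hx
  obtain ⟨C, g, hC, hCd, hCU, rfl⟩ := hy
  classical
  set D : ℕ ⊕ ℕ → Set X := fun i =>
    Sum.elim (fun n => (E₁ ∩ B n) ∪ (if n = 0 then (E₁ ∪ E₂)ᶜ else ∅))
      (fun n => E₂ ∩ C n) i with hDdef
  have hDmeas : ∀ i, MeasurableSet (D i) := by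
    rintro (n | n)
    · refine (h₁.inter (hB n)).union ?_
      split
      · exact (h₁.union h₂).compl
      · exact MeasurableSet.empty
    · exact h₂.inter (hC n)
  have hsub₁ : ∀ n, (if n = 0 then (E₁ ∪ E₂)ᶜ else (∅ : Set X)) ⊆ (E₁ ∪ E₂)ᶜ := by
    intro n; split <;> simp
  have hDdisj : Pairwise (Function.onFun Disjoint D) := by
    rintro (i | i) (j | j) hij
    · have hij' : i ≠ j := fun h => hij (by rw [h])
      refine Disjoint.union_left (Disjoint.union_right ?_ ?_) (Disjoint.union_right ?_ ?_)
      · exact (hBd hij').mono inter_subset_right inter_subset_right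
      · exact Disjoint.mono inter_subset_left (hsub₁ j)
          (disjoint_compl_right.mono_left subset_union_left)
      · exact Disjoint.mono (hsub₁ i) inter_subset_left
          (disjoint_compl_left.mono_right subset_union_left)
      · rcases Nat.eq_zero_or_pos i with hi | hi
        · have hj : j ≠ 0 := fun h => hij' (by rw [hi, h])
          simp [hj]
        · simp [Nat.pos_iff_ne_zero.mp hi]
    · refine Disjoint.union_left ?_ ?_
      · exact hd₁₂.mono inter_subset_left inter_subset_left
      · exact Disjoint.mono (hsub₁ i) inter_subset_left
          (disjoint_compl_left.mono_right subset_union_right)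
    · refine Disjoint.union_right ?_ ?_
      · exact (hd₁₂.symm).mono inter_subset_left inter_subset_left
      · exact Disjoint.mono inter_subset_left (hsub₁ j)
          (disjoint_compl_right.mono_left subset_union_right)
    · have hij' : i ≠ j := fun h => hij (by rw [h])
      exact (hCd hij').mono inter_subset_right inter_subset_right
  have hDU : (⋃ i, D i) = univ := by
    apply eq_univ_of_forall
    intro x
    by_cases hx1 : x ∈ E₁
    · have : x ∈ ⋃ n, B n := hBU ▸ mem_univ x
      obtain ⟨n, hn⟩ := mem_iUnion.1 this
      exact mem_iUnion.2 ⟨Sum.inl n, Or.inl ⟨hx1, hn⟩⟩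
    · by_cases hx2 : x ∈ E₂
      · have : x ∈ ⋃ n, C n := hCU ▸ mem_univ x
        obtain ⟨n, hn⟩ := mem_iUnion.1 this
        exact mem_iUnion.2 ⟨Sum.inr n, ⟨hx2, hn⟩⟩
      · refine mem_iUnion.2 ⟨Sum.inl 0, Or.inr ?_⟩
        simp [hx1, hx2]
  have hmem := mem_supSet'_of_partition μ (ι := ℕ ⊕ ℕ) (E₁ ∪ E₂) D (Sum.elim f g)
    hDmeas hDdisj hDU
  refine le_trans (le_of_eq ?_) (le_sSup hmem)
  rw [tsum_sum_type' (fun i => μ (Sum.elim f g i) ((E₁ ∪ E₂) ∩ D i))]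
  congr 1
  · refine tsum_congr fun n => ?_
    congr 1
    have h1 : (E₁ ∪ E₂) ∩ (E₁ ∩ B n) = E₁ ∩ B n :=
      inter_eq_self_of_subset_right (inter_subset_left.trans subset_union_left)
    have h2 : (E₁ ∪ E₂) ∩ (if n = 0 then (E₁ ∪ E₂)ᶜ else (∅ : Set X)) = ∅ := by
      split
      · exact inter_compl_self _
      · exact inter_empty _
    simp only [hDdef, Sum.elim_inl, inter_union_distrib_left, h1, h2, union_empty]
  · refine tsum_congr fun n => ?_
    congr 1
    simp only [hDdef, Sum.elim_inr]
    exact (inter_eq_self_of_subset_right (inter_subset_left.trans subset_union_right)).symm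

lemma supSet'_iUnion (E : ℕ → Set X) (hE : ∀ k, MeasurableSet (E k))
    (hEd : Pairwise (Function.onFun Disjoint E)) :
    sSup (supSet' μ (⋃ k, E k)) = ∑' k, sSup (supSet' μ (E k)) := by
  apply le_antisymm
  · refine sSup_le fun x hx => ?_
    obtain ⟨B, f, hB, hBd, hBU, rfl⟩ := hx
    have key : ∀ n, μ (f n) ((⋃ k, E k) ∩ B n) = ∑' k, μ (f n) (E k ∩ B n) := by
      intro n
      rw [iUnion_inter]
      exact measure_iUnion (hEd.mono fun i j h => h.mono inter_subset_left inter_subset_left)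
        (fun k => (hE k).inter (hB n))
    calc ∑' n, μ (f n) ((⋃ k, E k) ∩ B n) = ∑' n, ∑' k, μ (f n) (E k ∩ B n) :=
          tsum_congr key
      _ = ∑' k, ∑' n, μ (f n) (E k ∩ B n) := ENNReal.tsum_comm
      _ ≤ ∑' k, sSup (supSet' μ (E k)) :=
          ENNReal.tsum_le_tsum fun k => le_sSup ⟨B, f, hB, hBd, hBU, rfl⟩
  · rw [ENNReal.tsum_eq_iSup_sum]
    refine iSup_le fun s => ?_
    have : ∑ k ∈ s, sSup (supSet' μ (E k)) ≤ sSup (supSet' μ (⋃ k ∈ s, E k)) := by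
      induction s using Finset.cons_induction with
      | empty => simp [supSet'_empty μ]
      | cons a s ha ih =>
        rw [Finset.sum_cons]
        refine le_trans (add_le_add_right ih _) ?_
        refine le_trans (supSet'_superadd μ (hE a)
          (MeasurableSet.biUnion s.countable_toSet fun k _ => hE k) ?_) ?_
        · refine Set.disjoint_iUnion₂_right.2 fun k hk => hEd fun h => ha (h ▸ hk)
        · refine supSet'_mono μ ?_
          intro x hx
          rcases hx with hx | hx
          · exact mem_biUnion (Finset.mem_cons_self a s) hx
          · obtain ⟨k, hk, hxk⟩ := mem_iUnion₂.1 hx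
            exact mem_biUnion (Finset.mem_cons.2 (Or.inr hk)) hxk
    exact this.trans (supSet'_mono μ (iUnion₂_subset fun k _ => subset_iUnion E k))

/-- The supremum "measure" as an actual measure. -/
noncomputable def supMeasure : Measure X :=
  Measure.ofMeasurable (fun E _ => sSup (supSet' μ E)) (supSet'_empty μ)
    (fun E hE hEd => supSet'_iUnion μ E hE hEd)

lemma supMeasure_apply {E : Set X} (hE : MeasurableSet E) :
    supMeasure μ E = sSup (supSet' μ E) :=
  Measure.ofMeasurable_apply E hE

end Aux

/-- The lattice supremum `⨆ α, μ α` of a nonempty family of measures satisfies, for every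
measurable `A`, `(⨆ α, μ α)(A) = sup { ∑ₙ μ_{f n}(A ∩ Bₙ) }`, the supremum ranging over all
countable measurable partitions `(Bₙ)` of `X` and all functions `f : ℕ → I`. -/
theorem stmt_14 {X : Type*} [MeasurableSpace X] {I : Type*} [Nonempty I]
    (μ : I → Measure X) (A : Set X) (hA : MeasurableSet A) :
    (⨆ α, μ α) A =
      sSup {x : ℝ≥0∞ | ∃ (B : ℕ → Set X) (f : ℕ → I),
        (∀ n, MeasurableSet (B n)) ∧ Pairwise (Function.onFun Disjoint B) ∧ (⋃ n, B n) = univ ∧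
        x = ∑' n, μ (f n) (A ∩ B n)} := by
  have hset : {x : ℝ≥0∞ | ∃ (B : ℕ → Set X) (f : ℕ → I),
      (∀ n, MeasurableSet (B n)) ∧ Pairwise (Function.onFun Disjoint B) ∧ (⋃ n, B n) = univ ∧
      x = ∑' n, μ (f n) (A ∩ B n)} = supSet' μ A := rfl
  rw [hset]
  apply le_antisymm
  · have hle : (⨆ α, μ α) ≤ supMeasure μ := by
      refine iSup_le fun α => Measure.le_iff.2 fun E hE => ?_
      rw [supMeasure_apply μ hE]
      exact le_sSup (measure_apply_mem_supSet' μ α E)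
    calc (⨆ α, μ α) A ≤ supMeasure μ A := Measure.le_iff.1 hle A hA
      _ = sSup (supSet' μ A) := supMeasure_apply μ hA
  · refine sSup_le fun x hx => ?_
    obtain ⟨B, f, hB, hBd, hBU, rfl⟩ := hx
    calc ∑' n, μ (f n) (A ∩ B n) ≤ ∑' n, (⨆ α, μ α) (A ∩ B n) :=
          ENNReal.tsum_le_tsum fun n => Measure.le_iff'.1 (le_iSup μ (f n)) _
      _ = (⨆ α, μ α) (⋃ n, A ∩ B n) :=
          (measure_iUnion (hBd.mono fun i j h => h.mono inter_subset_right inter_subset_right)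
            (fun n => hA.inter (hB n))).symm
      _ = (⨆ α, μ α) A := by rw [← inter_iUnion, hBU, inter_univ]
end

section
/- Let μ and ν be finite measures on a measurable space (X, 𝒜), let s be the signed measure ν − μ, and let s = s⁺ − s⁻ be its Jordan decomposition into mutually singular (nonnegative) measures. Then for every A ∈ 𝒜, (μ ⊓ ν)(A) = μ(A) − s⁻(A) and (μ ⊔ ν)(A) = μ(A) + s⁺(A), where μ ⊓ ν and μ ⊔ ν are the greatest lower bound and least upper bound of μ and ν in the pointwise order on measures. -/
open MeasureTheory ENNReal

/-- For finite measures `μ, ν` with `s = ν - μ` (as a signed measure) and Jordan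
decomposition `s = s⁺ - s⁻`, the lattice infimum and supremum of `μ` and `ν` satisfy
`(μ ⊓ ν)(A) = μ(A) - s⁻(A)` and `(μ ⊔ ν)(A) = μ(A) + s⁺(A)` for every measurable `A`. -/
theorem stmt_18 {X : Type*} [MeasurableSpace X] (μ ν : Measure X)
    [IsFiniteMeasure μ] [IsFiniteMeasure ν]
    (s : SignedMeasure X) (hs : s = ν.toSignedMeasure - μ.toSignedMeasure) :
    ∀ A : Set X, MeasurableSet A →
      (μ ⊓ ν) A = μ A - s.toJordanDecomposition.negPart A ∧
      (μ ⊔ ν) A = μ A + s.toJordanDecomposition.posPart A := by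
  obtain ⟨i, hi₁, hi₂, hi₃, hp, hn⟩ := s.toJordanDecomposition_spec
  -- value of s on measurable sets
  have hsval : ∀ B : Set X, MeasurableSet B → s B = (ν B).toReal - (μ B).toReal := by
    intro B hB
    rw [hs, VectorMeasure.sub_apply, Measure.toSignedMeasure_apply_measurable hB,
      Measure.toSignedMeasure_apply_measurable hB]
    rfl
  -- comparisons on i and iᶜ
  have hle_i : ∀ B : Set X, MeasurableSet B → B ⊆ i → μ B ≤ ν B := by
    intro B hB hBi
    have h0 : (0 : VectorMeasure X ℝ) B ≤ s B :=
      VectorMeasure.subset_le_of_restrict_le_restrict 0 s hi₁ hi₂ hBi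
    rw [VectorMeasure.zero_apply, hsval B hB, sub_nonneg] at h0
    exact (ENNReal.toReal_le_toReal (measure_ne_top μ B) (measure_ne_top ν B)).1 h0
  have hle_c : ∀ B : Set X, MeasurableSet B → B ⊆ iᶜ → ν B ≤ μ B := by
    intro B hB hBi
    have h0 : s B ≤ (0 : VectorMeasure X ℝ) B :=
      VectorMeasure.subset_le_of_restrict_le_restrict s 0 hi₁.compl hi₃ hBi
    rw [VectorMeasure.zero_apply, hsval B hB, sub_nonpos] at h0
    exact (ENNReal.toReal_le_toReal (measure_ne_top ν B) (measure_ne_top μ B)).1 h0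
  -- splitting of measures
  have hsplit : ∀ (ξ : Measure X) (A : Set X), MeasurableSet A → ξ A = ξ (A ∩ i) + ξ (A ∩ iᶜ) := by
    intro ξ A hA
    rw [← Set.diff_eq, measure_inter_add_diff A hi₁]
  -- the candidate inf and sup
  set m₁ : Measure X := μ.restrict i + ν.restrict iᶜ with hm₁
  set m₂ : Measure X := ν.restrict i + μ.restrict iᶜ with hm₂
  have hm₁app : ∀ A : Set X, MeasurableSet A → m₁ A = μ (A ∩ i) + ν (A ∩ iᶜ) := by
    intro A hA
    rw [hm₁, Measure.add_apply, Measure.restrict_apply hA, Measure.restrict_apply hA]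
  have hm₂app : ∀ A : Set X, MeasurableSet A → m₂ A = ν (A ∩ i) + μ (A ∩ iᶜ) := by
    intro A hA
    rw [hm₂, Measure.add_apply, Measure.restrict_apply hA, Measure.restrict_apply hA]
  -- inf equality
  have hinf : μ ⊓ ν = m₁ := by
    apply le_antisymm
    · rw [Measure.le_iff]
      intro A hA
      rw [hsplit (μ ⊓ ν) A hA, hm₁app A hA]
      gcongr
      · exact inf_le_left
      · exact inf_le_right
    · apply le_inf
      · rw [Measure.le_iff]
        intro A hA
        rw [hm₁app A hA, hsplit μ A hA]
        gcongr _ + ?_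
        exact hle_c _ (hA.inter hi₁.compl) Set.inter_subset_right
      · rw [Measure.le_iff]
        intro A hA
        rw [hm₁app A hA, hsplit ν A hA]
        gcongr ?_ + _
        exact hle_i _ (hA.inter hi₁) Set.inter_subset_right
  -- sup equality
  have hsup : μ ⊔ ν = m₂ := by
    apply le_antisymm
    · apply sup_le
      · rw [Measure.le_iff]
        intro A hA
        rw [hm₂app A hA, hsplit μ A hA]
        gcongr ?_ + _
        exact hle_i _ (hA.inter hi₁) Set.inter_subset_right
      · rw [Measure.le_iff]
        intro A hA
        rw [hm₂app A hA, hsplit ν A hA]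
        gcongr _ + ?_
        exact hle_c _ (hA.inter hi₁.compl) Set.inter_subset_right
    · rw [Measure.le_iff]
      intro A hA
      rw [hsplit (μ ⊔ ν) A hA, hm₂app A hA]
      gcongr
      · exact le_sup_right
      · exact le_sup_left
  intro A hA
  -- values of posPart and negPart
  have hpA : s.toJordanDecomposition.posPart A = ν (i ∩ A) - μ (i ∩ A) := by
    rw [hp, SignedMeasure.toMeasureOfZeroLE_apply s hi₂ hi₁ hA]
    have hiA : MeasurableSet (i ∩ A) := hi₁.inter hA
    have hle := hle_i _ hiA Set.inter_subset_left
    rw [← ENNReal.ofReal_eq_coe_nnreal, hsval _ hiA,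
      ENNReal.ofReal_sub _ ENNReal.toReal_nonneg,
      ENNReal.ofReal_toReal (measure_ne_top ν _), ENNReal.ofReal_toReal (measure_ne_top μ _)]
  have hnA : s.toJordanDecomposition.negPart A = μ (iᶜ ∩ A) - ν (iᶜ ∩ A) := by
    rw [hn, SignedMeasure.toMeasureOfLEZero_apply s hi₃ hi₁.compl hA]
    have hiA : MeasurableSet (iᶜ ∩ A) := hi₁.compl.inter hA
    rw [← ENNReal.ofReal_eq_coe_nnreal, hsval _ hiA, neg_sub,
      ENNReal.ofReal_sub _ ENNReal.toReal_nonneg,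
      ENNReal.ofReal_toReal (measure_ne_top μ _), ENNReal.ofReal_toReal (measure_ne_top ν _)]
  constructor
  · rw [hinf, hm₁app A hA, hnA, hsplit μ A hA, Set.inter_comm iᶜ A]
    refine (ENNReal.eq_sub_of_add_eq ?_ ?_).symm.symm
    · exact (tsub_le_self.trans_lt (measure_lt_top μ _)).ne
    · rw [add_assoc, add_tsub_cancel_of_le
        (hle_c _ (hA.inter hi₁.compl) Set.inter_subset_right)]
  · rw [hsup, hm₂app A hA, hpA, hsplit μ A hA, Set.inter_comm i A, add_right_comm,
      add_tsub_cancel_of_le (hle_i _ (hA.inter hi₁) Set.inter_subset_right)]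
end
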